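/- Fix n ≥ 1, points c₁, …, c_N ∈ ℝⁿ, and radii r₁, …, r_N ∈ (0,1); set h_i = √(1 − r_i²). Regard ℝ^{n+i−1} as the subspace of ℝ^{n+i} spanned by the first n+i−1 coordinates, let e_i be the (n+i)-th standard basis vector, and define the affine maps T_i : ℝ^{n+i−1} → ℝ^{n+i}, z ↦ z − c_i + h_i e_i, and S_i : ℝ^{n+i} → ℝ^{n+i}, z ↦ z − (1 + h_i^{−1})⟨e_i, z⟩ e_i + c_i + e_i. Let ρ_i be Step-ReLU on ℝ^{n+i} and recursively define G_i : ℝⁿ → ℝ^{n+i} by G₀ = id and G_i = S_i ∘ ρ_i ∘ T_i ∘ G_{i−1}. Then for all i = 0, 1, …, N and all x ∈ ℝⁿ: G_i(x) = x if x ∉ ⋃_{j=1}^{i} B_{r_j}(c_j), and G_i(x) = c_j + e_j where j ≤ i is the smallest index with x ∈ B_{r_j}(c_j). -/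

import Mathlib

/-
A layer `S ∘ ρ ∘ T` with `h = √(1 - r²) ≠ 0` acts as the inclusion `ℝ^{n+i} ↪ ℝ^{n+i+1}` on the
inputs `z` with `‖T z‖ ≥ 1`, because `S ∘ T` is that inclusion, and sends all other inputs to
`S 0 = c + e`. By Pythagoras `‖T z‖² = ‖z - c‖² + h² = ‖z - c‖² + 1 - r²`, so on a point `z = x`
that has passed all earlier layers the threshold `‖T z‖ < 1` is exactly `x ∈ B_r(c)`. A point
`c_j + e_j` produced by an earlier layer has a coordinate `1` in the direction `e_j`, so
`‖T z‖ ≥ 1` and it passes all later layers unchanged.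
-/

open scoped Classical
open Metric Set

noncomputable section

abbrev Euc (n : ℕ) := EuclideanSpace ℝ (Fin n)

/-- The standard inclusion ℝᵏ ↪ ℝˡ into the first k coordinates. -/
def incl (k l : ℕ) (v : Euc k) : Euc l :=
  WithLp.toLp 2 (fun j => if h : (j : ℕ) < k then v ⟨j, h⟩ else 0)

/-- Step-ReLU on ℝⁿ: v ↦ v if ‖v‖ ≥ 1, and v ↦ 0 if ‖v‖ < 1. -/
def stepReLU {n : ℕ} (v : Euc n) : Euc n := if 1 ≤ ‖v‖ then v else 0

/-- The affine map T : ℝ^{n+i} → ℝ^{n+i+1}, z ↦ z − c + h·e, where e is the last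
standard basis vector of ℝ^{n+i+1} and c ∈ ℝⁿ is regarded inside ℝ^{n+i+1}. -/
def Tmap (n : ℕ) (c : Euc n) (h : ℝ) (i : ℕ) (z : Euc (n + i)) : Euc (n + i + 1) :=
  incl (n + i) (n + i + 1) z - incl n (n + i + 1) c
    + h • EuclideanSpace.single (Fin.last (n + i)) (1 : ℝ)

/-- The affine map S : ℝ^{n+i+1} → ℝ^{n+i+1},
z ↦ z − (1 + h⁻¹)⟨e, z⟩ e + c + e, where e is the last standard basis vector. -/
def Smap (n : ℕ) (c : Euc n) (h : ℝ) (i : ℕ) (z : Euc (n + i + 1)) : Euc (n + i + 1) :=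
  z - ((1 + h⁻¹) * z (Fin.last (n + i))) • EuclideanSpace.single (Fin.last (n + i)) (1 : ℝ)
    + incl n (n + i + 1) c + EuclideanSpace.single (Fin.last (n + i)) (1 : ℝ)

/-- The recursively defined maps Gᵢ : ℝⁿ → ℝ^{n+i}: G₀ = id and
G_{i+1} = Sᵢ ∘ ρ ∘ Tᵢ ∘ Gᵢ, where ρ is Step-ReLU and hᵢ = √(1 − rᵢ²). -/
def Gmap (n : ℕ) (c : ℕ → Euc n) (r : ℕ → ℝ) : (i : ℕ) → Euc n → Euc (n + i)
  | 0 => fun x => x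
  | (i+1) => fun x =>
      Smap n (c i) (Real.sqrt (1 - r i ^ 2)) i
        (stepReLU (Tmap n (c i) (Real.sqrt (1 - r i ^ 2)) i (Gmap n c r i x)))

section Inclusion

variable {k l : ℕ}

lemma incl_self (v : Euc k) : incl k k v = v := by
  ext j
  simp [incl]

lemma incl_incl {m : ℕ} (hkm : k ≤ m) (v : Euc k) : incl m l (incl k m v) = incl k l v := by
  ext j
  simp only [incl, PiLp.toLp_apply]
  split_ifs <;> first | rfl | omega

lemma incl_add (v w : Euc k) : incl k l (v + w) = incl k l v + incl k l w := by
  ext j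
  simp only [incl, PiLp.toLp_apply, PiLp.add_apply]
  split_ifs <;> simp

lemma incl_sub (v w : Euc k) : incl k l (v - w) = incl k l v - incl k l w := by
  ext j
  simp only [incl, PiLp.toLp_apply, PiLp.sub_apply]
  split_ifs <;> simp

lemma incl_apply_castLE (h : k ≤ l) (v : Euc k) (j : Fin k) : incl k l v (j.castLE h) = v j := by
  simp [incl]

lemma incl_apply_of_le (v : Euc k) {j : Fin l} (hj : k ≤ j) : incl k l v j = 0 := by
  simp [incl, hj]

lemma incl_single (h : k ≤ l) (p : Fin k) (a : ℝ) :
    incl k l (EuclideanSpace.single p a) = EuclideanSpace.single (p.castLE h) a := by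
  ext j
  simp only [incl, PiLp.toLp_apply, PiLp.single_apply, Fin.ext_iff, Fin.val_castLE]
  split_ifs <;> first | rfl | omega

lemma norm_incl (h : k ≤ l) (v : Euc k) : ‖incl k l v‖ = ‖v‖ := by
  simp only [EuclideanSpace.norm_eq]
  congr 1
  refine (Fintype.sum_of_injective (Fin.castLE h) (Fin.castLE_injective h) _ _ (fun j hj => ?_)
    (fun j => by rw [incl_apply_castLE])).symm
  rw [incl_apply_of_le]
  · simp
  · by_contra! hjk
    exact hj ⟨⟨j, hjk⟩, rfl⟩

end Inclusion

section Step

variable {n : ℕ} (c : Euc n) (h : ℝ) (i : ℕ) (z : Euc (n + i))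

lemma Tmap_apply_last : Tmap n c h i z (Fin.last (n + i)) = h := by
  simp [Tmap, incl_apply_of_le]

lemma norm_Tmap_sq :
    ‖Tmap n c h i z‖ ^ 2 = ‖z - incl n (n + i) c‖ ^ 2 + h ^ 2 := by
  have hT : Tmap n c h i z = incl (n + i) (n + i + 1) (z - incl n (n + i) c)
      + h • EuclideanSpace.single (Fin.last (n + i)) 1 := by
    rw [incl_sub, incl_incl (Nat.le_add_right n i), Tmap]
  have horth : inner ℝ (incl (n + i) (n + i + 1) (z - incl n (n + i) c))
      (h • EuclideanSpace.single (Fin.last (n + i)) (1 : ℝ)) = 0 := by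
    simp [inner_smul_right, EuclideanSpace.inner_single_right, incl_apply_of_le]
  rw [hT, norm_add_sq_real, horth, norm_incl (Nat.le_succ _), norm_smul,
    PiLp.norm_single, norm_one, mul_one, Real.norm_eq_abs, sq_abs, mul_zero, add_zero]

lemma Smap_Tmap (hh : h ≠ 0) :
    Smap n c h i (Tmap n c h i z) = incl (n + i) (n + i + 1) z := by
  have hcoef : (1 + h⁻¹) * h = h + 1 := by field_simp
  rw [Smap, Tmap_apply_last, hcoef, Tmap]
  module

lemma Smap_zero :
    Smap n c h i 0 = incl n (n + i + 1) c + EuclideanSpace.single (Fin.last (n + i)) 1 := by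
  simp [Smap]

lemma Smap_stepReLU_Tmap_of_one_le_norm (hh : h ≠ 0) (hz : 1 ≤ ‖Tmap n c h i z‖) :
    Smap n c h i (stepReLU (Tmap n c h i z)) = incl (n + i) (n + i + 1) z := by
  rw [stepReLU, if_pos hz, Smap_Tmap c h i z hh]

lemma Smap_stepReLU_Tmap_of_norm_lt_one (hz : ‖Tmap n c h i z‖ < 1) :
    Smap n c h i (stepReLU (Tmap n c h i z))
      = incl n (n + i + 1) c + EuclideanSpace.single (Fin.last (n + i)) 1 := by
  rw [stepReLU, if_neg hz.not_ge, Smap_zero]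

variable {c i z} {r : ℝ}

lemma norm_Tmap_lt_one_iff (hr₀ : 0 ≤ r) (hr₁ : r ≤ 1) :
    ‖Tmap n c √(1 - r ^ 2) i z‖ < 1 ↔ ‖z - incl n (n + i) c‖ < r := by
  have hsq : √(1 - r ^ 2) ^ 2 = 1 - r ^ 2 := Real.sq_sqrt (by nlinarith)
  rw [← sq_lt_one_iff₀ (norm_nonneg _), norm_Tmap_sq, hsq, ← sq_lt_sq₀ (norm_nonneg _) hr₀]
  constructor <;> intro <;> linarith

end Step

section Gmap

variable {n : ℕ} {c : ℕ → Euc n} {r : ℕ → ℝ} {x : Euc n}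

lemma Gmap_succ_of_one_le_norm {i : ℕ} (hri : r i ^ 2 < 1)
    (hx : 1 ≤ ‖Tmap n (c i) √(1 - r i ^ 2) i (Gmap n c r i x)‖) :
    Gmap n c r (i + 1) x = incl (n + i) (n + i + 1) (Gmap n c r i x) :=
  Smap_stepReLU_Tmap_of_one_le_norm _ _ _ _ (Real.sqrt_ne_zero'.2 (by linarith)) hx

theorem Gmap_eq_incl_of_forall_notMem {i : ℕ} (hr : ∀ j < i, r j ∈ Ico 0 1)
    (hx : ∀ j < i, x ∉ ball (c j) (r j)) : Gmap n c r i x = incl n (n + i) x := by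
  induction i with
  | zero => exact (incl_self x).symm
  | succ i ih =>
    have hGi := ih (fun j hj => hr j (by omega)) (fun j hj => hx j (by omega))
    obtain ⟨hr₀, hr₁⟩ := hr i i.lt_succ_self
    have hfar : 1 ≤ ‖Tmap n (c i) √(1 - r i ^ 2) i (Gmap n c r i x)‖ := by
      rw [← not_lt, norm_Tmap_lt_one_iff hr₀ hr₁.le, hGi, ← incl_sub,
        norm_incl (Nat.le_add_right n i), ← dist_eq_norm]
      exact hx i i.lt_succ_self
    rw [Gmap_succ_of_one_le_norm (by nlinarith) hfar, hGi, incl_incl (Nat.le_add_right n i)]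
    rfl

theorem Gmap_eq_of_mem_of_forall_notMem {i j : ℕ} (hji : j < i) (hr : ∀ k < i, r k ∈ Ico 0 1)
    (hxj : x ∈ ball (c j) (r j)) (hmin : ∀ k < j, x ∉ ball (c k) (r k)) :
    Gmap n c r i x = incl n (n + i) (c j)
      + EuclideanSpace.single ⟨n + j, Nat.add_lt_add_left hji n⟩ (1 : ℝ) := by
  induction i, hji using Nat.le_induction with
  | base =>
    have hGj := Gmap_eq_incl_of_forall_notMem (fun k hk => hr k (by omega)) hmin
    obtain ⟨hr₀, hr₁⟩ := hr j j.lt_succ_self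
    have hnear : ‖Tmap n (c j) √(1 - r j ^ 2) j (Gmap n c r j x)‖ < 1 := by
      rw [norm_Tmap_lt_one_iff hr₀ hr₁.le, hGj, ← incl_sub, norm_incl (Nat.le_add_right n j),
        ← dist_eq_norm]
      exact hxj
    exact Smap_stepReLU_Tmap_of_norm_lt_one _ _ _ _ hnear
  | succ i hji ih =>
    have hGi := ih (fun k hk => hr k (by omega))
    obtain ⟨hr₀, hr₁⟩ := hr i i.lt_succ_self
    set p : Fin (n + i) := ⟨n + j, by omega⟩
    have hfar : 1 ≤ ‖Tmap n (c i) √(1 - r i ^ 2) i (Gmap n c r i x)‖ := by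
      rw [← not_lt, norm_Tmap_lt_one_iff hr₀ hr₁.le, not_lt]
      calc r i ≤ 1 := hr₁.le
        _ = ‖(Gmap n c r i x - incl n (n + i) (c i)) p‖ := by
          simp [hGi, p, incl_apply_of_le]
        _ ≤ _ := PiLp.norm_apply_le _ p
    rw [Gmap_succ_of_one_le_norm (by nlinarith) hfar, hGi, incl_add,
      incl_incl (Nat.le_add_right n i), incl_single (Nat.le_succ _)]
    rfl

end Gmap

theorem Gmap_eq_general (n N : ℕ)
    (c : ℕ → Euc n) (r : ℕ → ℝ) (hr : ∀ j < N, r j ∈ Set.Ioo (0:ℝ) 1) :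
    ∀ i ≤ N, ∀ x : Euc n,
      ((∀ j < i, x ∉ Metric.ball (c j) (r j)) → Gmap n c r i x = incl n (n + i) x) ∧
      (∀ j, ∀ hji : j < i, x ∈ Metric.ball (c j) (r j) →
        (∀ k < j, x ∉ Metric.ball (c k) (r k)) →
        Gmap n c r i x
          = incl n (n + i) (c j)
            + EuclideanSpace.single (⟨n + j, Nat.add_lt_add_left hji n⟩ : Fin (n + i)) (1 : ℝ)) := by
  intro i hiN x
  have hr' : ∀ j < i, r j ∈ Ico 0 1 := fun j hj => Ioo_subset_Ico_self (hr j (by omega))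
  exact ⟨Gmap_eq_incl_of_forall_notMem hr',
    fun j hji hxj hmin => Gmap_eq_of_mem_of_forall_notMem hji hr' hxj hmin⟩

/-- For all i ≤ N and x ∈ ℝⁿ: if x lies in none of the balls
B_{rⱼ}(cⱼ) with j < i then Gᵢ(x) = x (under the inclusion ℝⁿ ↪ ℝ^{n+i}); and if j < i
is the smallest index with x ∈ B_{rⱼ}(cⱼ) then Gᵢ(x) = cⱼ + eⱼ, where eⱼ is the
(n+j+1)-st standard basis vector.  (Indices start at 0.) -/
theorem Gmap_eq (n N : ℕ) (hn : 1 ≤ n)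
    (c : ℕ → Euc n) (r : ℕ → ℝ) (hr : ∀ j < N, r j ∈ Set.Ioo (0:ℝ) 1) :
    ∀ i ≤ N, ∀ x : Euc n,
      ((∀ j < i, x ∉ Metric.ball (c j) (r j)) → Gmap n c r i x = incl n (n + i) x) ∧
      (∀ j, ∀ hji : j < i, x ∈ Metric.ball (c j) (r j) →
        (∀ k < j, x ∉ Metric.ball (c k) (r k)) →
        Gmap n c r i x
          = incl n (n + i) (c j)
            + EuclideanSpace.single (⟨n + j, Nat.add_lt_add_left hji n⟩ : Fin (n + i)) (1 : ℝ)) :=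
  Gmap_eq_general n N c r hr
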